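/- arXiv:2506.05035 — 3 statements merged into one kernel-verified Lean document; each statement's English description precedes it below -/
import Mathlib

section
/- Let F : ℝⁿ → ℝ be continuously differentiable and x, x' ∈ ℝⁿ. Then the sum over all coordinates i of the integrated gradients attributions IG_i(x, x') = (x_i − x'_i) · ∫₀¹ ∂_i F(x' + α(x − x')) dα equals F(x) − F(x') (completeness axiom of Integrated Gradients). -/
theorem stmt_1 (n : ℕ) (F : (Fin n → ℝ) → ℝ) (hF : ContDiff ℝ 1 F)
    (x x' : Fin n → ℝ) :
    ∑ i, (x i - x' i) *
        ∫ α in (0:ℝ)..1, fderiv ℝ F (x' + α • (x - x')) (Pi.single i 1)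
      = F x - F x' := by
  set γ : ℝ → (Fin n → ℝ) := fun t => x' + t • (x - x') with hγ
  have hγd : ∀ t : ℝ, HasDerivAt γ (x - x') t := by
    intro t
    simpa [hγ] using ((hasDerivAt_id t).smul_const (x - x')).const_add x'
  have hγc : Continuous γ := by
    continuity
  have hfc : Continuous (fun p => fderiv ℝ F p) := hF.continuous_fderiv one_ne_zero
  have hcont : ∀ v : Fin n → ℝ, Continuous (fun t => fderiv ℝ F (γ t) v) := by
    intro v
    exact (ContinuousLinearMap.apply ℝ ℝ v).continuous.comp (hfc.comp hγc)
  have hderiv : ∀ t : ℝ, HasDerivAt (fun t => F (γ t)) (fderiv ℝ F (γ t) (x - x')) t := by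
    intro t
    exact ((hF.differentiable one_ne_zero).differentiableAt.hasFDerivAt).comp_hasDerivAt t (hγd t)
  have hint : ∫ t in (0:ℝ)..1, fderiv ℝ F (γ t) (x - x') = F (γ 1) - F (γ 0) := by
    exact intervalIntegral.integral_eq_sub_of_hasDerivAt (fun t _ => hderiv t)
      ((hcont (x - x')).intervalIntegrable 0 1)
  have hexpand : ∀ t : ℝ, fderiv ℝ F (γ t) (x - x')
      = ∑ i, (x i - x' i) * fderiv ℝ F (γ t) (Pi.single i 1) := by
    intro t
    have h1 : (x - x') = ∑ i, (x i - x' i) • (Pi.single i 1 : Fin n → ℝ) := by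
      funext j
      simp [Finset.sum_apply, Pi.single_apply, mul_ite, Finset.sum_ite_eq']
    conv_lhs => rw [h1]
    simp [map_sum]
  calc ∑ i, (x i - x' i) * ∫ α in (0:ℝ)..1, fderiv ℝ F (x' + α • (x - x')) (Pi.single i 1)
      = ∫ t in (0:ℝ)..1, ∑ i, (x i - x' i) * fderiv ℝ F (γ t) (Pi.single i 1) := by
        rw [intervalIntegral.integral_finset_sum]
        · simp_rw [intervalIntegral.integral_const_mul]; rfl
        · intro i _
          exact (continuous_const.mul (hcont (Pi.single i 1))).intervalIntegrable 0 1
    _ = ∫ t in (0:ℝ)..1, fderiv ℝ F (γ t) (x - x') := by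
        simp_rw [← hexpand]
    _ = F x - F x' := by
        rw [hint]
        simp [hγ]
end

section
/- Let F : ℝⁿ → ℝ be continuously differentiable, and let x, x' differ only in coordinate i (x_j = x'_j for all j ≠ i, x_i ≠ x'_i). If F(x) ≠ F(x'), then the integrated gradients attribution IG_i(x, x') = (x_i − x'_i) · ∫₀¹ ∂_i F(x' + α(x − x')) dα is nonzero (sensitivity axiom). -/
theorem stmt_2 (n : ℕ) (F : (Fin n → ℝ) → ℝ) (hF : ContDiff ℝ 1 F)
    (x x' : Fin n → ℝ) (i : Fin n)
    (hagree : ∀ j, j ≠ i → x j = x' j) (hne : x i ≠ x' i)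
    (hFne : F x ≠ F x') :
    (x i - x' i) *
        ∫ α in (0:ℝ)..1, fderiv ℝ F (x' + α • (x - x')) (Pi.single i 1) ≠ 0 := by
  set v : Fin n → ℝ := Pi.single i 1 with hv
  have hxx : x - x' = (x i - x' i) • v := by
    funext j
    by_cases h : j = i
    · subst h; simp [hv, Pi.single_apply]
    · simp [hv, Pi.single_apply, h, hagree j h]
  set p : ℝ → (Fin n → ℝ) := fun α => x' + α • (x - x') with hp
  have hpd : ∀ α : ℝ, HasDerivAt p (x - x') α := by
    intro α
    have h1 : HasDerivAt (fun α : ℝ => α • (x - x')) ((1:ℝ) • (x - x')) α :=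
      (hasDerivAt_id α).smul_const (x - x')
    simpa [hp] using h1.const_add x'
  have hg : ∀ α : ℝ, HasDerivAt (fun α => F (p α)) (fderiv ℝ F (p α) (x - x')) α :=
    fun α => ((hF.differentiable one_ne_zero (p α)).hasFDerivAt).comp_hasDerivAt α (hpd α)
  have hpc : Continuous p := by
    fun_prop
  have hcont : Continuous fun α : ℝ => fderiv ℝ F (p α) (x - x') :=
    ((hF.continuous_fderiv one_ne_zero).comp hpc).clm_apply continuous_const
  have key : ∫ α in (0:ℝ)..1, fderiv ℝ F (p α) (x - x') = F (p 1) - F (p 0) :=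
    intervalIntegral.integral_eq_sub_of_hasDerivAt (fun α _ => hg α)
      (hcont.intervalIntegrable 0 1)
  have hval : ∀ α : ℝ, fderiv ℝ F (p α) (x - x')
      = (x i - x' i) * fderiv ℝ F (p α) v := by
    intro α
    rw [hxx, map_smul]
    rfl
  have hmul : (x i - x' i) * ∫ α in (0:ℝ)..1, fderiv ℝ F (p α) v
      = F (p 1) - F (p 0) := by
    rw [← key]
    rw [← intervalIntegral.integral_const_mul]
    exact intervalIntegral.integral_congr fun α _ => (hval α).symm
  have hp1 : p 1 = x := by simp [hp]
  have hp0 : p 0 = x' := by simp [hp]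
  rw [hmul, hp1, hp0]
  exact sub_ne_zero_of_ne hFne
end

section
/- Let F : ℝⁿ → ℝ be continuously differentiable and x, x' differ only in coordinate i. For any binary mask M ∈ {0,1}ⁿ with M_i = 1, the masked baseline x̃(M) = (1−M)⊙x + M⊙x' equals x'. Consequently, the attribution obtained by averaging MaskingIG over any distribution of masks conditioned on M_i = 1 equals the standard integrated gradients attribution IG_i(x, x'), and hence TIMING satisfies the sensitivity axiom: if F(x) ≠ F(x'), then TIMING_i(x) ≠ 0. -/
open Classical in
theorem ig_ftc (n : ℕ) (F : (Fin n → ℝ) → ℝ) (hF : ContDiff ℝ 1 F)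
    (x x' : Fin n → ℝ) (i : Fin n)
    (hagree : ∀ j, j ≠ i → x j = x' j) :
    (x i - x' i) *
        ∫ α in (0:ℝ)..1, fderiv ℝ F (x' + α • (x - x')) (Pi.single i 1)
      = F x - F x' := by
  set v : Fin n → ℝ := x - x' with hvdef
  have hv : v = (x i - x' i) • (Pi.single i 1 : Fin n → ℝ) := by
    funext j
    by_cases hj : j = i
    · subst hj; simp [hvdef]
    · simp [hvdef, Pi.single_eq_of_ne hj, hagree j hj]
  have hpathderiv : ∀ α : ℝ, HasDerivAt (fun t : ℝ => x' + t • v) v α := by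
    intro α
    simpa using ((hasDerivAt_id α).smul_const v).const_add x'
  have hderiv : ∀ α : ℝ,
      HasDerivAt (fun t : ℝ => F (x' + t • v)) (fderiv ℝ F (x' + α • v) v) α := by
    intro α
    exact ((hF.differentiable one_ne_zero (x' + α • v)).hasFDerivAt).comp_hasDerivAt α
      (hpathderiv α)
  have hcont : Continuous fun α : ℝ => fderiv ℝ F (x' + α • v) v := by
    have h1 : Continuous fun α : ℝ => fderiv ℝ F (x' + α • v) :=
      (hF.continuous_fderiv one_ne_zero).comp (by continuity)
    exact h1.clm_apply continuous_const
  have hFTC : ∫ α in (0:ℝ)..1, fderiv ℝ F (x' + α • v) v = F x - F x' := by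
    have := intervalIntegral.integral_eq_sub_of_hasDerivAt
      (f := fun t : ℝ => F (x' + t • v))
      (f' := fun α => fderiv ℝ F (x' + α • v) v)
      (fun t _ => hderiv t) (hcont.intervalIntegrable 0 1)
    simpa [hvdef] using this
  calc (x i - x' i) *
        ∫ α in (0:ℝ)..1, fderiv ℝ F (x' + α • v) (Pi.single i 1)
      = ∫ α in (0:ℝ)..1, (x i - x' i) * fderiv ℝ F (x' + α • v) (Pi.single i 1) := by
        rw [intervalIntegral.integral_const_mul]
    _ = ∫ α in (0:ℝ)..1, fderiv ℝ F (x' + α • v) v := by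
        congr 1; funext α
        rw [hv, map_smul, smul_eq_mul]
    _ = F x - F x' := hFTC

open Classical in
theorem stmt_11 (n : ℕ) (F : (Fin n → ℝ) → ℝ) (hF : ContDiff ℝ 1 F)
    (x x' : Fin n → ℝ) (i : Fin n)
    (hagree : ∀ j, j ≠ i → x j = x' j) (hne : x i ≠ x' i)
    (Ω : Type) [Fintype Ω]
    (p : Ω → ℝ) (hp : ∀ ω, 0 ≤ p ω) (hsum : ∑ ω, p ω = 1)
    (M : Ω → Fin n → ℝ) (hM : ∀ ω j, M ω j = 0 ∨ M ω j = 1)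
    (hpos : 0 < ∑ ω ∈ Finset.univ.filter (fun ω => M ω i = 1), p ω) :
    (∀ m : Fin n → ℝ, (∀ j, m j = 0 ∨ m j = 1) → m i = 1 →
        (fun j => (1 - m j) * x j + m j * x' j) = x') ∧
    (∑ ω ∈ Finset.univ.filter (fun ω => M ω i = 1), p ω *
          ((x i - ((1 - M ω i) * x i + M ω i * x' i)) *
            ∫ α in (0:ℝ)..1,
              fderiv ℝ F
                ((fun j => (1 - M ω j) * x j + M ω j * x' j) +
                  α • (x - fun j => (1 - M ω j) * x j + M ω j * x' j))
                (Pi.single i 1))) /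
        (∑ ω ∈ Finset.univ.filter (fun ω => M ω i = 1), p ω)
      = (x i - x' i) *
          ∫ α in (0:ℝ)..1, fderiv ℝ F (x' + α • (x - x')) (Pi.single i 1) ∧
    (F x ≠ F x' →
      (∑ ω ∈ Finset.univ.filter (fun ω => M ω i = 1), p ω *
            ((x i - ((1 - M ω i) * x i + M ω i * x' i)) *
              ∫ α in (0:ℝ)..1,
                fderiv ℝ F
                  ((fun j => (1 - M ω j) * x j + M ω j * x' j) +
                    α • (x - fun j => (1 - M ω j) * x j + M ω j * x' j))
                  (Pi.single i 1))) /
          (∑ ω ∈ Finset.univ.filter (fun ω => M ω i = 1), p ω) ≠ 0) := by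
  have part1 : ∀ m : Fin n → ℝ, (∀ j, m j = 0 ∨ m j = 1) → m i = 1 →
      (fun j => (1 - m j) * x j + m j * x' j) = x' := by
    intro m hm hmi
    funext j
    by_cases hj : j = i
    · subst hj; rw [hmi]; ring
    · rcases hm j with h | h <;> rw [h] <;> rw [hagree j hj] <;> ring
  set S := Finset.univ.filter (fun ω => M ω i = 1) with hS
  set c := (x i - x' i) *
      ∫ α in (0:ℝ)..1, fderiv ℝ F (x' + α • (x - x')) (Pi.single i 1) with hc
  have hterm : ∀ ω ∈ S, p ω *
      ((x i - ((1 - M ω i) * x i + M ω i * x' i)) *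
        ∫ α in (0:ℝ)..1,
          fderiv ℝ F
            ((fun j => (1 - M ω j) * x j + M ω j * x' j) +
              α • (x - fun j => (1 - M ω j) * x j + M ω j * x' j))
            (Pi.single i 1)) = p ω * c := by
    intro ω hω
    have hmi : M ω i = 1 := by simpa [hS] using hω
    have hbase := part1 (M ω) (hM ω) hmi
    rw [hbase, hmi]
    rw [hc]; ring
  have hsumeq : (∑ ω ∈ S, p ω *
      ((x i - ((1 - M ω i) * x i + M ω i * x' i)) *
        ∫ α in (0:ℝ)..1,
          fderiv ℝ F
            ((fun j => (1 - M ω j) * x j + M ω j * x' j) +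
              α • (x - fun j => (1 - M ω j) * x j + M ω j * x' j))
            (Pi.single i 1))) = (∑ ω ∈ S, p ω) * c := by
    rw [Finset.sum_congr rfl hterm, ← Finset.sum_mul]
  have part2 : (∑ ω ∈ S, p ω *
      ((x i - ((1 - M ω i) * x i + M ω i * x' i)) *
        ∫ α in (0:ℝ)..1,
          fderiv ℝ F
            ((fun j => (1 - M ω j) * x j + M ω j * x' j) +
              α • (x - fun j => (1 - M ω j) * x j + M ω j * x' j))
            (Pi.single i 1))) / (∑ ω ∈ S, p ω) = c := by
    rw [hsumeq, mul_div_cancel_left₀ _ hpos.ne']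
  refine ⟨part1, part2, fun hFne => ?_⟩
  rw [part2, hc, ig_ftc n F hF x x' i hagree]
  exact sub_ne_zero_of_ne hFne
end
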